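/- arXiv:2205.13665 — 3 statements merged into one kernel-verified Lean document; each statement's English description precedes it below -/
import Mathlib

section
/- (Lemma 3.2.) Let φ(x,y) be an L(M)-formula satisfying the dual shatter condition π*_φ(k) ∈ o(k²), and suppose there exists b ∈ U^n such that φ(M,b) = ∅. Then there exists an L(M)-formula θ(y) ∈ tp(b/M) such that the set φ(U,b) realizes only finitely many φ_{θ(M)}-types, i.e. the map c ↦ {a ∈ θ(M) : U ⊨ φ(c,a)} takes only finitely many values as c ranges over φ(U,b). -/
/-!
Suppose no `θ ∈ tp(b/M)` works. Given `a₀, …, a_{k-1} ∈ M^n` and finitely many `x ∈ M^m`, let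
`θ(y)` say that every `φ`-type over `ā` realized in `φ(U,b)` is realized by some `c` with `φ(c,y)`,
and that `¬φ(x,y)` for the given `x`. Then `θ ∈ tp(b/M)` since `φ(M,b) = ∅`, so `φ(U,b)` realizes
infinitely many `φ_{θ(M)}`-types, and some `a_k ∈ θ(M)` splits a `φ`-type over `ā` realized in
`φ(U,b)`. By elementarity the realizations required by `θ(a_k)` can be taken in `M`; they contain
`a_k` in their type, the old witnesses do not. Iterating, `φ(U,b)` realizes at least `k + 1`
types over `a₀, …, a_{k-1}` and `M^m` at least `k(k+1)/2`, against `π*_φ(k) ∈ o(k²)`.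
-/

open Filter FirstOrder FirstOrder.Language

section TypeCounting

variable {X Y D : Type*}

def typeOver (R : X → Y → Prop) {k : ℕ} (a : Fin k → Y) (x : X) : Set (Fin k) :=
  {i | R x (a i)}

variable {R : X → Y → Prop} {k : ℕ} {a : Fin k → Y} {y : Y}

theorem preimage_castSucc_typeOver_snoc (x : X) :
    Fin.castSucc ⁻¹' typeOver R (Fin.snoc a y) x = typeOver R a x := by
  ext i
  simp [typeOver]

theorem last_mem_typeOver_snoc {x : X} : Fin.last k ∈ typeOver R (Fin.snoc a y) x ↔ R x y := by
  simp [typeOver]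

theorem ncard_range_typeOver_lt_snoc {e₁ e₂ : X} (he : typeOver R a e₁ = typeOver R a e₂)
    (h₁ : R e₁ y) (h₂ : ¬ R e₂ y) :
    (Set.range (typeOver R a)).ncard < (Set.range (typeOver R (Fin.snoc a y))).ncard := by
  have hrange : Set.range (typeOver R a) =
      Set.preimage Fin.castSucc '' Set.range (typeOver R (Fin.snoc a y)) := by
    rw [← Set.range_comp]
    exact congrArg Set.range (funext fun x => (preimage_castSucc_typeOver_snoc x).symm)
  rw [hrange]
  refine lt_of_le_of_ne Set.ncard_image_le fun h => h₂ ?_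
  have := Set.injOn_of_ncard_image_eq h (Set.toFinite _) (Set.mem_range_self e₁)
    (Set.mem_range_self e₂) (by simp only [preimage_castSucc_typeOver_snoc, he])
  exact last_mem_typeOver_snoc.mp (this ▸ last_mem_typeOver_snoc.mpr h₁)

theorem exists_injOn_typeOver_snoc {W : Set X} (hWfin : W.Finite)
    (hW : Set.InjOn (typeOver R a) W) (hWy : ∀ x ∈ W, ¬ R x y) {P : Set (Set (Fin k))}
    (hP : ∀ p ∈ P, ∃ x, typeOver R a x = p ∧ R x y) :
    ∃ W' : Set X, W'.Finite ∧ Set.InjOn (typeOver R (Fin.snoc a y)) W' ∧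
      W.ncard + P.ncard ≤ W'.ncard := by
  choose w hw using hP
  have hwinj : Function.Injective fun p : P => w p p.2 := fun p q h =>
    Subtype.ext <| by rw [← (hw p p.2).1, ← (hw q q.2).1]; exact congrArg _ h
  have hdisj : Disjoint W (Set.range fun p : P => w p p.2) := by
    rw [Set.disjoint_right]
    rintro _ ⟨⟨p, hp⟩, rfl⟩ hpW
    exact hWy _ hpW (hw p hp).2
  refine ⟨W ∪ Set.range fun p : P => w p p.2, hWfin.union (Set.finite_range _), ?_, ?_⟩
  · intro x₁ hx₁ x₂ hx₂ h
    have hres : typeOver R a x₁ = typeOver R a x₂ := by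
      rw [← preimage_castSucc_typeOver_snoc, h, preimage_castSucc_typeOver_snoc]
    have hlast : R x₁ y ↔ R x₂ y := by
      rw [← last_mem_typeOver_snoc (R := R) (a := a) (x := x₁), h, last_mem_typeOver_snoc]
    rcases hx₁ with hx₁ | ⟨⟨p₁, hp₁⟩, rfl⟩ <;> rcases hx₂ with hx₂ | ⟨⟨p₂, hp₂⟩, rfl⟩
    · exact hW hx₁ hx₂ hres
    · exact absurd (hlast.mpr (hw p₂ hp₂).2) (hWy _ hx₁)
    · exact absurd (hlast.mp (hw p₁ hp₁).2) (hWy _ hx₂)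
    · rw [(hw p₁ hp₁).1, (hw p₂ hp₂).1] at hres
      subst hres
      rfl
  · rw [Set.ncard_union_eq hdisj hWfin, Set.ncard_range_of_injective hwinj,
      Nat.card_coe_set_eq]

/-- What the failure of the theorem produces, with `R` the relation `φ(x,y)` on `M^m × M^n` and
`S` the relation `φ(c,y)` on `φ(U,b) × M^n`. -/
def SplitsTypes (R : X → Y → Prop) (S : D → Y → Prop) : Prop :=
  ∀ ⦃k : ℕ⦄ (a : Fin k → Y) (F : Set X), F.Finite → ∃ y : Y, (∀ x ∈ F, ¬ R x y) ∧
    (∃ e₁ e₂ : D, typeOver S a e₁ = typeOver S a e₂ ∧ S e₁ y ∧ ¬ S e₂ y) ∧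
    ∀ e : D, ∃ x : X, typeOver R a x = typeOver S a e ∧ R x y

namespace SplitsTypes

variable {S : D → Y → Prop}

theorem exists_injOn_typeOver (h : SplitsTypes R S) : ∀ k : ℕ, ∃ (a : Fin k → Y) (W : Set X),
    W.Finite ∧ Set.InjOn (typeOver R a) W ∧ k * (k + 1) ≤ 2 * W.ncard ∧
      k + 1 ≤ (Set.range (typeOver S a)).ncard
  | 0 => by
    obtain ⟨-, -, ⟨e, -⟩, -⟩ := h Fin.elim0 ∅ Set.finite_empty
    refine ⟨Fin.elim0, ∅, Set.finite_empty, Set.injOn_empty _, by simp, ?_⟩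
    exact (Set.ncard_pos (Set.toFinite _)).mpr (Set.range_nonempty_iff_nonempty.mpr ⟨e⟩)
  | k + 1 => by
    obtain ⟨a, W, hWfin, hW, hWcard, hScard⟩ := h.exists_injOn_typeOver k
    obtain ⟨y, hWy, ⟨e₁, e₂, he, h₁, h₂⟩, hwit⟩ := h a W hWfin
    obtain ⟨W', hW'fin, hW', hW'card⟩ := exists_injOn_typeOver_snoc hWfin hW hWy
      (P := Set.range (typeOver S a)) (by rintro _ ⟨e, rfl⟩; exact hwit e)
    refine ⟨Fin.snoc a y, W', hW'fin, hW', by nlinarith, ?_⟩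
    have := ncard_range_typeOver_lt_snoc he h₁ h₂
    omega

theorem exists_ncard_range_typeOver (h : SplitsTypes R S) (k : ℕ) :
    ∃ a : Fin k → Y, k * (k + 1) ≤ 2 * (Set.range (typeOver R a)).ncard := by
  obtain ⟨a, W, -, hW, hk, -⟩ := h.exists_injOn_typeOver k
  refine ⟨a, hk.trans (Nat.mul_le_mul_left 2 ?_)⟩
  rw [← hW.ncard_image]
  exact Set.ncard_le_ncard (Set.image_subset_range _ _)

end SplitsTypes

end TypeCounting

theorem exists_eq_and_ne_of_infinite_range {α β γ : Type*} {f : α → β} {g : α → γ}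
    (hf : (Set.range f).Infinite) (hg : (Set.range g).Finite) : ∃ x y, g x = g y ∧ f x ≠ f y := by
  by_contra! hfg
  have := hg.to_subtype
  refine hf ((Set.finite_range fun t : Set.range g => f t.2.choose).subset ?_)
  rintro _ ⟨x, rfl⟩
  exact ⟨⟨g x, x, rfl⟩, hfg _ _ (Exists.choose_spec (⟨x, rfl⟩ : g x ∈ Set.range g))⟩

theorem not_tendsto_div_sq_zero {g : ℕ → ℝ} (hg : ∀ k : ℕ, (k : ℝ) * (k + 1) ≤ 2 * g k) :
    ¬ Tendsto (fun k : ℕ => g k / (k : ℝ) ^ 2) atTop (nhds 0) := by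
  intro h
  have : (1 / 2 : ℝ) ≤ 0 := ge_of_tendsto h ((eventually_ge_atTop 1).mono fun k hk => ?_)
  · norm_num at this
  have hk : (1 : ℝ) ≤ k := by exact_mod_cast hk
  rw [le_div_iff₀ (by positivity)]
  nlinarith [hg k]

namespace FirstOrder.Language

variable {L : Language} {U : Type*} [L.Structure U]

theorem ElementarySubstructure.exists_realize_coe (M : L.ElementarySubstructure U) {β : Type*}
    [Finite β] {χ : L[[(M : Set U)]].Formula β} (h : ∃ c : β → U, χ.Realize c) :
    ∃ c : β → M, χ.Realize fun j => (c j : U) := by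
  set χ' : L.Formula ((M : Set U) ⊕ β) := BoundedFormula.constantsVarsEquiv χ
  have hχ' : ∀ c : β → U, χ'.Realize (Sum.elim (fun a => (a : U)) c) ↔ χ.Realize c := fun c =>
    BoundedFormula.realize_constantsVarsEquiv
  let e : Set.Elem (M : Set U) → M := fun a => ⟨a, a.2⟩
  have hU : (χ'.iExs β).Realize (M.subtype ∘ e) := by
    rw [Formula.realize_iExs]
    obtain ⟨c, hc⟩ := h
    exact ⟨c, (hχ' c).mpr hc⟩
  obtain ⟨c, hc⟩ := (Formula.realize_iExs.mp ((M.subtype.map_formula _ e).mp hU))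
  refine ⟨c, (hχ' _).mp ?_⟩
  rw [← M.subtype.map_formula, Sum.comp_elim] at hc
  exact hc

namespace Formula

variable {A : Set U} {α β : Type*}

noncomputable def substRight (ψ : L[[A]].Formula (α ⊕ β)) (c : β → A) : L[[A]].Formula α :=
  ψ.subst (Sum.elim Term.var fun j => (L.con (c j)).term)

theorem realize_substRight {ψ : L[[A]].Formula (α ⊕ β)} {c : β → A} {v : α → U} :
    (ψ.substRight c).Realize v ↔ ψ.Realize (Sum.elim v fun j => (c j : U)) := by
  rw [substRight, Formula.Realize, BoundedFormula.realize_subst, ← Formula.Realize]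
  refine iff_of_eq (congrArg _ (funext fun x => ?_))
  rcases x with i | j <;> simp

noncomputable def substLeft (ψ : L[[A]].Formula (α ⊕ β)) (c : α → A) : L[[A]].Formula β :=
  (ψ.relabel Sum.swap).substRight c

theorem realize_substLeft {ψ : L[[A]].Formula (α ⊕ β)} {c : α → A} {v : β → U} :
    (ψ.substLeft c).Realize v ↔ ψ.Realize (Sum.elim (fun i => (c i : U)) v) := by
  rw [substLeft, realize_substRight, realize_relabel, Sum.elim_swap]

open Classical in
noncomputable def typeFormula (ψ : L[[A]].Formula (α ⊕ β)) {k : ℕ} (a : Fin k → β → A)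
    (p : Set (Fin k)) : L[[A]].Formula α :=
  Formula.iInf fun i : Fin k => if i ∈ p then ψ.substRight (a i) else (ψ.substRight (a i)).not

theorem realize_typeFormula {ψ : L[[A]].Formula (α ⊕ β)} {k : ℕ} {a : Fin k → β → A}
    {p : Set (Fin k)} {v : α → U} :
    (ψ.typeFormula a p).Realize v ↔
      typeOver (fun v (y : β → A) => ψ.Realize (Sum.elim v fun j => (y j : U))) a v = p := by
  rw [typeFormula, realize_iInf, Set.ext_iff]
  refine forall_congr' fun i => ?_
  split_ifs with hi <;> simp [realize_substRight, typeOver, hi]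

noncomputable def splittingFormula [Finite α] (ψ : L[[A]].Formula (α ⊕ β)) {k : ℕ}
    (a : Fin k → β → A) (P : Set (Set (Fin k))) (F : Set (α → A)) [Finite F] :
    L[[A]].Formula β :=
  (Formula.iInf fun p : P =>
      Formula.iExs α ((ψ.typeFormula a p).relabel Sum.inr ⊓ ψ.relabel Sum.swap)) ⊓
    Formula.iInf fun x : F => (ψ.substLeft x).not

theorem realize_splittingFormula [Finite α] {ψ : L[[A]].Formula (α ⊕ β)} {k : ℕ}
    {a : Fin k → β → A} {P : Set (Set (Fin k))} {F : Set (α → A)} [Finite F] {v : β → U} :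
    (ψ.splittingFormula a P F).Realize v ↔
      (∀ p ∈ P, ∃ c : α → U, typeOver (fun v (y : β → A) =>
          ψ.Realize (Sum.elim v fun j => (y j : U))) a c = p ∧ ψ.Realize (Sum.elim c v)) ∧
        ∀ x ∈ F, ¬ ψ.Realize (Sum.elim (fun i => (x i : U)) v) := by
  simp only [splittingFormula, realize_inf, realize_iInf, realize_iExs, realize_relabel,
    Sum.elim_comp_inr, Sum.elim_swap, realize_typeFormula, realize_not, realize_substLeft,
    Subtype.forall]

end Formula

theorem splitsTypes_of_forall_infinite {α β : Type*} [Finite α] (M : L.ElementarySubstructure U)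
    (φ : L[[(M : Set U)]].Formula (α ⊕ β)) (b : β → U)
    (hb : ∀ c : α → M, ¬ φ.Realize (Sum.elim (fun j => (c j : U)) b))
    (hinf : ∀ θ : L[[(M : Set U)]].Formula β, θ.Realize b →
      (Set.range fun c : {c : α → U // φ.Realize (Sum.elim c b)} =>
        {a : β → M | θ.Realize (fun j => (a j : U)) ∧
          φ.Realize (Sum.elim c.1 fun j => (a j : U))}).Infinite) :
    SplitsTypes
      (fun (x : α → M) (y : β → M) => φ.Realize (Sum.elim (fun i => (x i : U)) fun j => (y j : U)))
      (fun (c : {c : α → U // φ.Realize (Sum.elim c b)}) (y : β → M) =>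
        φ.Realize (Sum.elim c.1 fun j => (y j : U))) := by
  intro k a F hF
  have := hF.to_subtype
  set S := fun (c : {c : α → U // φ.Realize (Sum.elim c b)}) (y : β → M) =>
    φ.Realize (Sum.elim c.1 fun j => (y j : U))
  set θ := φ.splittingFormula a (Set.range (typeOver S a)) F
  have hθb : θ.Realize b := Formula.realize_splittingFormula.mpr
    ⟨by rintro _ ⟨d, rfl⟩; exact ⟨d.1, rfl, d.2⟩, fun x _ => hb x⟩
  obtain ⟨c₁, c₂, hS, hne⟩ :=
    exists_eq_and_ne_of_infinite_range (hinf θ hθb) (Set.toFinite (Set.range (typeOver S a)))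
  obtain ⟨y, hy⟩ := not_forall.mp (mt Set.ext hne)
  have hθy : θ.Realize fun j => (y j : U) := by
    by_contra h
    exact hy (iff_of_false (fun h' => h h'.1) fun h' => h h'.1)
  obtain ⟨hwit, hFy⟩ := Formula.realize_splittingFormula.mp hθy
  refine ⟨y, hFy, ?_, fun e => ?_⟩
  · by_cases h₁ : S c₁ y
    · exact ⟨c₁, c₂, hS, h₁, fun h₂ => hy ⟨fun _ => ⟨hθy, h₂⟩, fun _ => ⟨hθy, h₁⟩⟩⟩
    · exact ⟨c₂, c₁, hS.symm, by by_contra h₂; exact hy (iff_of_false (h₁ ·.2) (h₂ ·.2)), h₁⟩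
  · obtain ⟨c, hc, hcy⟩ := hwit _ ⟨e, rfl⟩
    obtain ⟨w, hw⟩ := M.exists_realize_coe
      (χ := φ.typeFormula a (typeOver S a e) ⊓ φ.substRight y)
      ⟨c, Formula.realize_inf.mpr
        ⟨Formula.realize_typeFormula.mpr hc, Formula.realize_substRight.mpr hcy⟩⟩
    rw [Formula.realize_inf, Formula.realize_typeFormula, Formula.realize_substRight] at hw
    exact ⟨w, hw⟩

end FirstOrder.Language

/-- **Lemma 3.2.** Let `M ≼ U`, and let `φ(x,y)` be an `L(M)`-formula whose dual shatter
function (computed in `M`) is `o(k²)`.  If `b ∈ U^n` satisfies `φ(M,b) = ∅`, then there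
is a formula `θ(y) ∈ tp(b/M)` such that the elements of `φ(U,b)` realize only finitely
many `φ_{θ(M)}`-types. -/
theorem lemma_3_2 {L : FirstOrder.Language} {U : Type*} [L.Structure U]
    (M : L.ElementarySubstructure U) {m n : ℕ}
    (φ : (L[[(M : Set U)]]).Formula (Fin m ⊕ Fin n))
    (hshatter : ∃ g : ℕ → ℝ,
      Tendsto (fun k : ℕ => g k / (k : ℝ) ^ 2) atTop (nhds 0) ∧
      ∀ (k : ℕ) (a : Fin k → (Fin n → M)),
        (((Set.range fun c : Fin m → M =>
          {i : Fin k | φ.Realize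
            (Sum.elim (fun j => (c j : U)) (fun j => (a i j : U)))}).ncard : ℝ) ≤ g k))
    (b : Fin n → U)
    (hb : ∀ c : Fin m → M, ¬ φ.Realize (Sum.elim (fun j => (c j : U)) b)) :
    ∃ θ : (L[[(M : Set U)]]).Formula (Fin n),
      θ.Realize b ∧
      (Set.range fun c : {c : Fin m → U // φ.Realize (Sum.elim c b)} =>
        {a : Fin n → M | θ.Realize (fun j => (a j : U)) ∧
          φ.Realize (Sum.elim c.1 fun j => (a j : U))}).Finite := by
  obtain ⟨g, hg, hgk⟩ := hshatter
  by_contra! hinf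
  refine not_tendsto_div_sq_zero (fun k => ?_) hg
  obtain ⟨a, ha⟩ := (splitsTypes_of_forall_infinite M φ b hb hinf).exists_ncard_range_typeOver k
  calc (k : ℝ) * (k + 1) ≤ 2 * (Set.range (typeOver _ a)).ncard := by exact_mod_cast ha
    _ ≤ 2 * g k := by gcongr; exact hgk k a
end

section
/- (Quantitative claim in the proof of Lemma 3.2.) Let φ(x,y) be an L(M)-formula and b ∈ U^n with φ(M,b) = ∅. Suppose that for every L(M)-formula θ(y) ∈ tp(b/M), the set φ(U,b) realizes infinitely many φ_{θ(M)}-types. Then for every integer k ≥ 1 there exist a₁, …, a_k ∈ M^n such that the number of distinct sets {i : 1 ≤ i ≤ k, M ⊨ φ(c,a_i)}, as c ranges over M^m, is at least (k² + k)/2. In particular, the dual shatter function of φ is not in o(k²). -/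
/-!
Let `R x y` be `φ(x, y)` for `x ∈ U^m`, `y ∈ M^n`, and count the traces `{i | R x aᵢ}` of
`X = M^m` and of `Y = φ(U, b)` on a tuple `a = (a₁, …, a_k)`. The formula `θ(y)` saying that
`y` avoids chosen representatives in `M^m` of the traces of `X`, and that every trace of `Y` is
realized by some `x` with `φ(x, y)`, lies in `tp(b/M)`. As `Y` realizes infinitely many
`φ_{θ(M)}`-types but only finitely many traces on `a`, some `a_{k+1} ∈ θ(M)` separates two
points of `Y` with the same trace. By elementarity every trace of `Y` then reappears in `X` with
`a_{k+1}` added, and every trace of `X` reappears without it. So `Y` gains a trace at each step,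
and `X` gains at least as many traces as `Y` had, i.e. at least `k + 1`.
-/

open Filter FirstOrder FirstOrder.Language

theorem Set.ncard_image_inter_add_ncard_image_sdiff_le {γ δ : Type*} (f : γ → δ) {S : Set γ}
    (hS : S.Finite) (t : Set γ) : (f '' (S ∩ t)).ncard + (f '' (S \ t)).ncard ≤ S.ncard :=
  (add_le_add (Set.ncard_image_le (hS.subset Set.inter_subset_left))
    (Set.ncard_image_le hS.sdiff)).trans_eq (Set.ncard_inter_add_ncard_sdiff_eq_ncard S t hS)

theorem exists_eq_and_not_subset_of_infinite_range {ι γ δ : Type*} [Finite δ]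
    {F : ι → Set γ} (g : ι → δ) (hF : (Set.range F).Infinite) :
    ∃ u v, g u = g v ∧ ¬ F u ⊆ F v := by
  obtain ⟨-, u₀, -⟩ := hF.nonempty
  have : Nonempty ι := ⟨u₀⟩
  by_contra! h
  refine hF ((Set.finite_range (F ∘ Function.invFun g)).subset ?_)
  rintro _ ⟨u, rfl⟩
  have hu : g (Function.invFun g (g u)) = g u := Function.invFun_eq ⟨u, rfl⟩
  exact ⟨g u, (h _ _ hu).antisymm (h _ _ hu.symm)⟩

theorem not_tendsto_div_sq_zero_of_le {g : ℕ → ℝ}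
    (hg : ∀ k, 1 ≤ k → (((k ^ 2 + k) / 2 : ℕ) : ℝ) ≤ g k) :
    ¬ Tendsto (fun k : ℕ => g k / (k : ℝ) ^ 2) atTop (nhds 0) := by
  intro hlim
  have hhalf : ∀ᶠ k : ℕ in atTop, (1 / 2 : ℝ) ≤ g k / (k : ℝ) ^ 2 := by
    filter_upwards [eventually_ge_atTop 1] with k hk
    have hnat : k ^ 2 ≤ 2 * ((k ^ 2 + k) / 2) := by omega
    have hcast : ((k ^ 2 : ℕ) : ℝ) ≤ ((2 * ((k ^ 2 + k) / 2) : ℕ) : ℝ) := by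
      exact_mod_cast hnat
    push_cast at hcast
    rw [le_div_iff₀ (by positivity)]
    linarith [hg k hk]
  linarith [ge_of_tendsto hlim hhalf]

section Traces

variable {α β : Type*} (R : α → β → Prop)

def traceOn {ι : Type*} (a : ι → β) (x : α) : Set ι := {i | R x (a i)}

/-- In the application, `X = M^m`, `Y = φ(U, b)` and `y` is the parameter `a_{k+1}` to be
added to `a = (a₁, …, a_k)`. -/
structure SplitsTraces (X Y : Set α) {k : ℕ} (a : Fin k → β) (y : β) : Prop where
  exists_split : ∃ w ∈ Y, ∃ w' ∈ Y, traceOn R a w = traceOn R a w' ∧ R w y ∧ ¬ R w' y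
  avoid : traceOn R a '' X ⊆ traceOn R a '' {x ∈ X | ¬ R x y}
  realize : traceOn R a '' Y ⊆ traceOn R a '' {x ∈ X | R x y}

variable {R} {k : ℕ} {X Y : Set α} (a : Fin k → β) (y : β)

@[simp]
theorem castSucc_preimage_traceOn_snoc (x : α) :
    Fin.castSucc ⁻¹' traceOn R (Fin.snoc a y) x = traceOn R a x := by
  ext i
  simp [traceOn]

@[simp]
theorem last_mem_traceOn_snoc (x : α) : Fin.last k ∈ traceOn R (Fin.snoc a y) x ↔ R x y := by
  simp [traceOn]

theorem ncard_traceOn_sep_add_le (X : Set α) :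
    (traceOn R a '' {x ∈ X | R x y}).ncard + (traceOn R a '' {x ∈ X | ¬ R x y}).ncard ≤
      (traceOn R (Fin.snoc a y) '' X).ncard := by
  convert Set.ncard_image_inter_add_ncard_image_sdiff_le (Fin.castSucc ⁻¹' ·)
    (Set.toFinite (traceOn R (Fin.snoc a y) '' X)) {T | Fin.last k ∈ T} using 3 <;>
  · ext T
    simp [and_comm]

variable {a y}

theorem SplitsTraces.ncard_add_ncard_le (h : SplitsTraces R X Y a y) :
    (traceOn R a '' X).ncard + (traceOn R a '' Y).ncard ≤
      (traceOn R (Fin.snoc a y) '' X).ncard :=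
  calc (traceOn R a '' X).ncard + (traceOn R a '' Y).ncard
      ≤ (traceOn R a '' {x ∈ X | R x y}).ncard +
          (traceOn R a '' {x ∈ X | ¬ R x y}).ncard := by
        rw [add_comm]
        exact add_le_add (Set.ncard_le_ncard h.realize (Set.toFinite _))
          (Set.ncard_le_ncard h.avoid (Set.toFinite _))
    _ ≤ _ := ncard_traceOn_sep_add_le a y X

theorem SplitsTraces.ncard_lt (h : SplitsTraces R X Y a y) :
    (traceOn R a '' Y).ncard < (traceOn R (Fin.snoc a y) '' Y).ncard := by
  obtain ⟨w, hw, w', hw', heq, hRw, hRw'⟩ := h.exists_split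
  set Yin := traceOn R a '' {x ∈ Y | R x y}
  set Yout := traceOn R a '' {x ∈ Y | ¬ R x y}
  have hunion : Yin ∪ Yout = traceOn R a '' Y := by
    rw [← Set.image_union]
    congr 1
    ext x
    by_cases hx : R x y <;> simp [hx]
  have hinter : (Yin ∩ Yout).Nonempty :=
    ⟨traceOn R a w, ⟨w, ⟨hw, hRw⟩, rfl⟩, ⟨w', ⟨hw', hRw'⟩, heq.symm⟩⟩
  calc (traceOn R a '' Y).ncard < (traceOn R a '' Y).ncard + (Yin ∩ Yout).ncard :=
        Nat.lt_add_of_pos_right ((Set.ncard_pos (Set.toFinite _)).2 hinter)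
    _ = Yin.ncard + Yout.ncard := by
        rw [← hunion, Set.ncard_union_add_ncard_inter _ _ (Set.toFinite _) (Set.toFinite _)]
    _ ≤ _ := ncard_traceOn_sep_add_le a y Y

theorem exists_ncard_traceOn_ge_triangular
    (hsplit : ∀ (k : ℕ) (a : Fin k → β), ∃ y, SplitsTraces R X Y a y) (k : ℕ) :
    ∃ a : Fin k → β,
      k < (traceOn R a '' Y).ncard ∧ (k ^ 2 + k) / 2 ≤ (traceOn R a '' X).ncard := by
  induction k with
  | zero =>
    obtain ⟨y, h⟩ := hsplit 0 Fin.elim0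
    obtain ⟨w, hw, -⟩ := h.exists_split
    exact ⟨Fin.elim0, (Set.ncard_pos (Set.toFinite _)).2 ⟨_, w, hw, rfl⟩, by simp⟩
  | succ k ih =>
    obtain ⟨a, hY, hX⟩ := ih
    obtain ⟨y, h⟩ := hsplit k a
    refine ⟨Fin.snoc a y, by have := h.ncard_lt; omega, ?_⟩
    have := h.ncard_add_ncard_le
    have : (k + 1) ^ 2 + (k + 1) = k ^ 2 + k + 2 * (k + 1) := by ring
    omega

end Traces

namespace Set

variable {L : Language} {M : Type*} [L.Structure M] {A : Set M} {α β ι : Type*}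

theorem definableMap_sumElim_left {c : β → M} (hc : ∀ j, c j ∈ A) :
    A.DefinableMap L fun v : α → M => Sum.elim c v := by
  rintro (j | j)
  · exact definableFun_const L α (hc j)
  · exact DefinableFun.proj L

theorem definableMap_sumElim_right {c : β → M} (hc : ∀ j, c j ∈ A) :
    A.DefinableMap L fun v : α → M => Sum.elim v c := by
  rintro (j | j)
  · exact DefinableFun.proj L
  · exact definableFun_const L α (hc j)

theorem Definable.setOf_setOf_mem_eq [Finite ι] {S : ι → Set (α → M)}
    (hS : ∀ i, A.Definable L (S i)) (T : Set ι) : A.Definable L {v | {i | v ∈ S i} = T} := by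
  classical
  convert definable_iInter_of_finite (f := fun i => if i ∈ T then S i else (S i)ᶜ)
    fun i => by split_ifs; exacts [hS i, (hS i).compl] using 1
  ext v
  simp only [Set.ext_iff, mem_iInter]
  refine forall_congr' fun i => ?_
  split_ifs with hi <;> simp [hi]

end Set

namespace FirstOrder.Language.ElementarySubstructure

variable {L : Language} {U : Type*} [L.Structure U] (M : L.ElementarySubstructure U)

theorem realize_withConstants_coe {α : Type*} (ψ : L[[(M : Set U)]].Formula α) (x : α → M) :
    ψ.Realize (((↑) : M → U) ∘ x) ↔ ψ.Realize x := by
  simp only [Formula.Realize, ← BoundedFormula.realize_constantsVarsEquiv,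
    ← M.subtype.map_boundedFormula]
  convert Iff.rfl using 3
  funext i
  cases i <;> rfl

theorem exists_coe_of_definable {α β : Type*} [Finite β] {S : Set (α ⊕ β → U)}
    (hS : (M : Set U).Definable L S) (v : α → M)
    (h : ∃ x : β → U, Sum.elim (fun i => (v i : U)) x ∈ S) :
    ∃ x : β → M, Sum.elim (fun i => (v i : U)) (fun j => (x j : U)) ∈ S := by
  obtain ⟨ψ, rfl⟩ := hS
  have hU : (ψ.iExs β).Realize (((↑) : M → U) ∘ v) := Formula.realize_iExs.2 h
  obtain ⟨x, hx⟩ := Formula.realize_iExs.1 ((M.realize_withConstants_coe _ v).1 hU)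
  refine ⟨x, ?_⟩
  rwa [← M.realize_withConstants_coe, Sum.comp_elim] at hx

variable {M} {m n : ℕ} (φ : L[[(M : Set U)]].Formula (Fin m ⊕ Fin n))

def realizeRel (x : Fin m → U) (y : Fin n → M) : Prop :=
  φ.Realize (Sum.elim x fun j => (y j : U))

theorem definable_setOf_realize_and_traceOn_eq {k : ℕ} (a : Fin k → Fin n → M)
    (T : Set (Fin k)) : (M : Set U).Definable L
      {w : Fin n ⊕ Fin m → U |
        φ.Realize (w ∘ Sum.swap) ∧ traceOn (realizeRel φ) a (w ∘ Sum.inr) = T} :=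
  have hΦ : (M : Set U).Definable L (Set.ofPred φ.Realize) := ⟨φ, rfl⟩
  (hΦ.preimage_comp Sum.swap).inter ((Set.Definable.setOf_setOf_mem_eq (fun i =>
    hΦ.preimage_map (Set.definableMap_sumElim_right fun j => (a i j).2)) T).preimage_comp Sum.inr)

theorem exists_splitsTraces (b : Fin n → U)
    (hb : ∀ c : Fin m → M, ¬ φ.Realize (Sum.elim (fun j => (c j : U)) b))
    (htypes : ∀ θ : (L[[(M : Set U)]]).Formula (Fin n), θ.Realize b →
      (Set.range fun c : {c : Fin m → U // φ.Realize (Sum.elim c b)} =>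
        {a : Fin n → M | θ.Realize (fun j => (a j : U)) ∧
          φ.Realize (Sum.elim c.1 fun j => (a j : U))}).Infinite)
    {k : ℕ} (a : Fin k → Fin n → M) :
    ∃ y, SplitsTraces (realizeRel φ) (Set.range fun c : Fin m → M => fun j => (c j : U))
      {x | φ.Realize (Sum.elim x b)} a y := by
  set R := realizeRel φ
  set X := Set.range fun c : Fin m → M => fun j => (c j : U)
  set Y := {x | φ.Realize (Sum.elim x b)}
  have hrep (T : traceOn R a '' X) : ∃ c : Fin m → M, traceOn R a (fun j => (c j : U)) = T := by
    obtain ⟨_, _, ⟨c, rfl⟩, rfl⟩ := T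
    exact ⟨c, rfl⟩
  choose rep hrep using hrep
  set Θ : Set (Fin n → U) :=
    {y | (∀ T, ¬ φ.Realize (Sum.elim (fun j => (rep T j : U)) y)) ∧
      ∀ T : traceOn R a '' Y, ∃ x, φ.Realize (Sum.elim x y) ∧ traceOn R a x = T}
  obtain ⟨θ, hθ⟩ : (M : Set U).Definable L Θ := by
    have havoid := Set.definable_iInter_of_finite (ι := traceOn R a '' X) fun T =>
      (Set.Definable.preimage_map (Set.definableMap_sumElim_left fun j => (rep T j).2)
        (S := Set.ofPred φ.Realize) ⟨φ, rfl⟩).compl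
    have hrealize := Set.definable_iInter_of_finite (ι := traceOn R a '' Y) fun T =>
      (definable_setOf_realize_and_traceOn_eq φ a T).exists_of_finite
    convert havoid.inter hrealize using 1
    ext y
    simp only [Θ, Set.mem_inter_iff, Set.mem_iInter, Set.mem_compl_iff, Set.mem_preimage,
      Set.mem_ofPred_eq, Sum.elim_swap, Sum.elim_comp_inr]
    rfl
  have hbΘ : b ∈ Θ := ⟨fun T => hb (rep T), fun ⟨_, w, hw, hT⟩ => ⟨w, hw, hT⟩⟩
  obtain ⟨w, w', hww', hsub⟩ := exists_eq_and_not_subset_of_infinite_range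
    (fun w : {c // φ.Realize (Sum.elim c b)} => traceOn R a w.1) (htypes θ (hθ.subset hbΘ))
  obtain ⟨y, ⟨hyθ, hwy⟩, hw'y⟩ := Set.not_subset.1 hsub
  have hyΘ : (fun j => (y j : U)) ∈ Θ := hθ.symm.subset hyθ
  refine ⟨y, ⟨w, w.2, w', w'.2, hww', hwy, fun h => hw'y ⟨hyθ, h⟩⟩, ?_, ?_⟩
  · rintro _ ⟨_, ⟨c, rfl⟩, rfl⟩
    let T : traceOn R a '' X := ⟨_, _, ⟨c, rfl⟩, rfl⟩
    exact ⟨_, ⟨⟨rep T, rfl⟩, hyΘ.1 T⟩, hrep T⟩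
  · rintro _ ⟨x, hx, rfl⟩
    obtain ⟨e, he⟩ := M.exists_coe_of_definable
      (definable_setOf_realize_and_traceOn_eq φ a (traceOn R a x)) y
      (by simpa [Sum.elim_swap] using hyΘ.2 ⟨_, x, hx, rfl⟩)
    simp only [Set.mem_ofPred_eq, Sum.elim_swap, Sum.elim_comp_inr] at he
    exact ⟨_, ⟨⟨e, rfl⟩, he.1⟩, he.2⟩

end FirstOrder.Language.ElementarySubstructure

/-- **The quantitative claim in the proof of Lemma 3.2.** Let `M ≼ U`, `φ(x,y)` an
`L(M)`-formula, and `b ∈ U^n` with `φ(M,b) = ∅`.  If for every `θ(y) ∈ tp(b/M)` the set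
`φ(U,b)` realizes infinitely many `φ_{θ(M)}`-types, then for every `k ≥ 1` there are
`a₁, …, a_k ∈ M^n` over which at least `(k² + k)/2` traces are realized by elements of
`M^m`; in particular the dual shatter function of `φ` is not in `o(k²)`. -/
theorem lemma_3_2_quantitative_claim {L : FirstOrder.Language} {U : Type*} [L.Structure U]
    (M : L.ElementarySubstructure U) {m n : ℕ}
    (φ : (L[[(M : Set U)]]).Formula (Fin m ⊕ Fin n))
    (b : Fin n → U)
    (hb : ∀ c : Fin m → M, ¬ φ.Realize (Sum.elim (fun j => (c j : U)) b))
    (htypes : ∀ θ : (L[[(M : Set U)]]).Formula (Fin n), θ.Realize b →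
      (Set.range fun c : {c : Fin m → U // φ.Realize (Sum.elim c b)} =>
        {a : Fin n → M | θ.Realize (fun j => (a j : U)) ∧
          φ.Realize (Sum.elim c.1 fun j => (a j : U))}).Infinite) :
    (∀ k : ℕ, 1 ≤ k → ∃ a : Fin k → (Fin n → M),
      (k ^ 2 + k) / 2 ≤
        (Set.range fun c : Fin m → M =>
          {i : Fin k | φ.Realize
            (Sum.elim (fun j => (c j : U)) (fun j => (a i j : U)))}).ncard) ∧
    ¬ ∃ g : ℕ → ℝ,
      Tendsto (fun k : ℕ => g k / (k : ℝ) ^ 2) atTop (nhds 0) ∧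
      ∀ (k : ℕ) (a : Fin k → (Fin n → M)),
        (((Set.range fun c : Fin m → M =>
          {i : Fin k | φ.Realize
            (Sum.elim (fun j => (c j : U)) (fun j => (a i j : U)))}).ncard : ℝ) ≤ g k) := by
  have hquad (k : ℕ) : ∃ a : Fin k → (Fin n → M), (k ^ 2 + k) / 2 ≤
      (Set.range fun c : Fin m → M =>
        {i : Fin k | φ.Realize (Sum.elim (fun j => (c j : U)) (fun j => (a i j : U)))}).ncard := by
    obtain ⟨a, -, ha⟩ := exists_ncard_traceOn_ge_triangular
      (fun _ a => ElementarySubstructure.exists_splitsTraces φ b hb htypes a) k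
    exact ⟨a, by rwa [← Set.range_comp] at ha⟩
  refine ⟨fun k _ => hquad k, ?_⟩
  rintro ⟨g, hlim, hbound⟩
  refine not_tendsto_div_sq_zero_of_le (fun k _ => ?_) hlim
  obtain ⟨a, ha⟩ := hquad k
  exact (Nat.cast_le.2 ha).trans (hbound k a)
end

section
/- (Claim 3.3 in the proof of Theorem 3.1: refining θ.) Let φ(x,y) be an L(M)-formula and b ∈ U^n such that for every L(M)-formula σ(y), if the family {φ(M,a) : a ∈ σ(M)} has the finite intersection property then U ⊭ σ(b). Let θ(y) ∈ tp(b/M) be such that φ(U,b) realizes only finitely many φ_{θ(M)}-types. Then there exists θ*(y) ∈ tp(b/M) with θ*(U) ⊆ θ(U) such that for every c ∈ φ(U,b) exactly one of the following holds: (a) θ*(M) ∩ φ(c,M) = ∅; (b) for every θ'(y) ∈ tp(b/M), the set θ'(M) ∩ θ*(M) ∩ φ(c,M) is not definable. -/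
open Filter FirstOrder FirstOrder.Language

/-!
Only finitely many sets `t = θ(M) ∩ φ(c,M)` arise from `c ∈ φ(U,b)`. If such a `t` agrees on
some `θ' ∈ tp(b/M)` with a definable set `σ(M)`, then `σ(M) ⊆ φ(c,M)`, so by elementarity the
family `{φ(M,a) : a ∈ σ(M)}` has the finite intersection property and the hypothesis on `b`
gives `¬σ(b)`; thus `θ' ∧ ¬σ ∈ tp(b/M)` is disjoint from `t`. The conjunction `θ*` of `θ` with
these finitely many formulas kills exactly those `t`, and every other `c` falls into case (b).
-/

namespace FirstOrder.Language.ElementarySubstructure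

variable {L : FirstOrder.Language} {U : Type*} [L.Structure U] (M : L.ElementarySubstructure U)
  {α γ : Type*}

theorem realize_coe_iff (ψ : L[[(M : Set U)]].Formula α) (x : α → M) :
    ψ.Realize (fun j => (x j : U)) ↔ ψ.Realize x := by
  simp only [Formula.Realize, ← BoundedFormula.realize_constantsVarsEquiv,
    ← M.subtype.map_boundedFormula]
  convert Iff.rfl using 2
  funext i
  cases i <;> rfl

theorem exists_realize_coe_of_exists_realize [Finite γ] (ψ : L[[(M : Set U)]].Formula (α ⊕ γ))
    (p : α → M) (h : ∃ c : γ → U, ψ.Realize (Sum.elim (fun i => (p i : U)) c)) :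
    ∃ c : γ → M, ψ.Realize (Sum.elim (fun i => (p i : U)) fun j => (c j : U)) := by
  have hM := (M.realize_coe_iff ψ.iExs p).1 (Formula.realize_iExs.2 h)
  obtain ⟨c, hc⟩ := Formula.realize_iExs.1 hM
  refine ⟨c, ?_⟩
  convert (M.realize_coe_iff ψ (Sum.elim p c)).2 hc using 2
  rename_i i
  cases i <;> rfl

/-- `ψ(M)`. -/
def realizeSet (ψ : L[[(M : Set U)]].Formula α) : Set (α → M) :=
  {a | ψ.Realize fun j => (a j : U)}

/-- `φ(c,M)`, for a tuple `c` from `U`. -/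
def fiber (φ : L[[(M : Set U)]].Formula (γ ⊕ α)) (c : γ → U) : Set (α → M) :=
  {a | φ.Realize (Sum.elim c fun j => (a j : U))}

/-- The family `{φ(M,a) : a ∈ s}` has the finite intersection property. -/
def IsFinitelySatisfiable (φ : L[[(M : Set U)]].Formula (γ ⊕ α)) (s : Set (α → M)) : Prop :=
  ∀ F : Finset (α → M), (∀ a ∈ F, a ∈ s) → ∃ c : γ → M, ∀ a ∈ F,
    φ.Realize (Sum.elim (fun j => (c j : U)) fun j => (a j : U))

/-- `t` agrees with a definable set on `θ'(M)` for some `θ' ∈ tp(b/M)`. -/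
def DefinableOnType (b : α → U) (t : Set (α → M)) : Prop :=
  ∃ θ' : L[[(M : Set U)]].Formula α, θ'.Realize b ∧
    ∃ σ : L[[(M : Set U)]].Formula α, M.realizeSet θ' ∩ t = M.realizeSet σ

@[simp]
theorem realizeSet_inf (ψ χ : L[[(M : Set U)]].Formula α) :
    M.realizeSet (ψ ⊓ χ) = M.realizeSet ψ ∩ M.realizeSet χ := by
  ext a
  exact Formula.realize_inf

@[simp]
theorem realizeSet_not (ψ : L[[(M : Set U)]].Formula α) :
    M.realizeSet ψ.not = (M.realizeSet ψ)ᶜ := by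
  ext a
  exact Formula.realize_not

@[simp]
theorem realizeSet_bot : M.realizeSet (⊥ : L[[(M : Set U)]].Formula α) = ∅ := by
  ext a
  simp [realizeSet]

theorem isFinitelySatisfiable_of_subset_fiber [Finite γ] {φ : L[[(M : Set U)]].Formula (γ ⊕ α)}
    {s : Set (α → M)} {c : γ → U} (hs : s ⊆ M.fiber φ c) : M.IsFinitelySatisfiable φ s := by
  intro F hF
  let ψ : L[[(M : Set U)]].Formula ((F × α) ⊕ γ) :=
    Formula.iInf fun a : F => φ.relabel (Sum.elim Sum.inr fun j => Sum.inl (a, j))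
  have hψ : ∀ v : γ → U, ψ.Realize (Sum.elim (fun i => (i.1.1 i.2 : U)) v) ↔
      ∀ a ∈ F, φ.Realize (Sum.elim v fun j => (a j : U)) := by
    intro v
    simp only [ψ, Formula.realize_iInf, Formula.realize_relabel, Subtype.forall]
    refine forall₂_congr fun a _ => iff_of_eq (congrArg _ ?_)
    funext i
    cases i <;> rfl
  obtain ⟨c', hc'⟩ := M.exists_realize_coe_of_exists_realize ψ (fun i => i.1.1 i.2)
    ⟨c, (hψ c).2 fun a ha => hs (hF a ha)⟩
  exact ⟨c', (hψ _).1 hc'⟩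

theorem definableOnType_empty (b : α → U) : M.DefinableOnType b ∅ :=
  ⟨⊤, Formula.realize_top.2 trivial, ⊥, by rw [Set.inter_empty, realizeSet_bot]⟩

variable {M} in
theorem DefinableOnType.of_inter {b : α → U} {t : Set (α → M)} {ψ : L[[(M : Set U)]].Formula α}
    (hψ : ψ.Realize b) (h : M.DefinableOnType b (M.realizeSet ψ ∩ t)) : M.DefinableOnType b t := by
  obtain ⟨θ', hθ', σ, hσ⟩ := h
  exact ⟨θ' ⊓ ψ, Formula.realize_inf.2 ⟨hθ', hψ⟩, σ, by rw [realizeSet_inf, Set.inter_assoc, hσ]⟩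

variable {M} in
theorem DefinableOnType.exists_inter_eq_empty [Finite γ] {φ : L[[(M : Set U)]].Formula (γ ⊕ α)}
    {b : α → U} (hb : ∀ σ : L[[(M : Set U)]].Formula α,
      M.IsFinitelySatisfiable φ (M.realizeSet σ) → ¬σ.Realize b)
    {t : Set (α → M)} {c : γ → U} (htc : t ⊆ M.fiber φ c) (ht : M.DefinableOnType b t) :
    ∃ ψ : L[[(M : Set U)]].Formula α, ψ.Realize b ∧ M.realizeSet ψ ∩ t = ∅ := by
  obtain ⟨θ', hθ', σ, hσ⟩ := ht
  have hσb : ¬σ.Realize b :=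
    hb σ (M.isFinitelySatisfiable_of_subset_fiber (hσ ▸ Set.inter_subset_right.trans htc))
  refine ⟨θ' ⊓ σ.not, Formula.realize_inf.2 ⟨hθ', Formula.realize_not.2 hσb⟩, ?_⟩
  rw [realizeSet_inf, realizeSet_not, Set.inter_right_comm, hσ, Set.inter_compl_self]

theorem exists_le_forall_inter_eq_empty {b : α → U} {θ : L[[(M : Set U)]].Formula α}
    (hθ : θ.Realize b) {S : Set (Set (α → M))} (hS : S.Finite)
    (h : ∀ t ∈ S, ∃ ψ : L[[(M : Set U)]].Formula α, ψ.Realize b ∧ M.realizeSet ψ ∩ t = ∅) :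
    ∃ θs : L[[(M : Set U)]].Formula α, θs.Realize b ∧ (∀ a : α → U, θs.Realize a → θ.Realize a) ∧
      ∀ t ∈ S, M.realizeSet θs ∩ t = ∅ := by
  choose ψ hψb hψ using fun t : S => h t t.2
  have : Finite S := hS
  refine ⟨θ ⊓ Formula.iInf ψ, Formula.realize_inf.2 ⟨hθ, Formula.realize_iInf.2 hψb⟩,
    fun a ha => (Formula.realize_inf.1 ha).1, fun t ht => Set.subset_empty_iff.1 ?_⟩
  rw [← hψ ⟨t, ht⟩]
  exact Set.inter_subset_inter_left _ fun a ha => Formula.realize_iInf.1 (Formula.realize_inf.1 ha).2 _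

end FirstOrder.Language.ElementarySubstructure

/-- **Claim 3.3 in the proof of Theorem 3.1 (refining θ).** Let `M ≼ U`, `φ(x,y)` an
`L(M)`-formula, and `b ∈ U^n` such that no `L(M)`-formula `σ(y)` defining a consistent
subfamily holds of `b`.  Let `θ(y) ∈ tp(b/M)` be such that `φ(U,b)` realizes only
finitely many `φ_{θ(M)}`-types.  Then there is `θ*(y) ∈ tp(b/M)` with `θ*(U) ⊆ θ(U)`
such that for every `c ∈ φ(U,b)` exactly one of the following holds:
(a) `θ*(M) ∩ φ(c,M) = ∅`; (b) for every `θ'(y) ∈ tp(b/M)` the set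
`θ'(M) ∩ θ*(M) ∩ φ(c,M)` is not definable. -/
theorem claim_3_3 {L : FirstOrder.Language} {U : Type*} [L.Structure U]
    (M : L.ElementarySubstructure U) {m n : ℕ}
    (φ : (L[[(M : Set U)]]).Formula (Fin m ⊕ Fin n))
    (b : Fin n → U)
    (hb : ∀ σ : (L[[(M : Set U)]]).Formula (Fin n),
      (∀ F : Finset (Fin n → M), (∀ a ∈ F, σ.Realize (fun j => (a j : U))) →
        ∃ c : Fin m → M, ∀ a ∈ F,
          φ.Realize (Sum.elim (fun j => (c j : U)) (fun j => (a j : U)))) →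
      ¬ σ.Realize b)
    (θ : (L[[(M : Set U)]]).Formula (Fin n))
    (hθb : θ.Realize b)
    (hfin : (Set.range fun c : {c : Fin m → U // φ.Realize (Sum.elim c b)} =>
        {a : Fin n → M | θ.Realize (fun j => (a j : U)) ∧
          φ.Realize (Sum.elim c.1 fun j => (a j : U))}).Finite) :
    ∃ θs : (L[[(M : Set U)]]).Formula (Fin n),
      θs.Realize b ∧
      (∀ a : Fin n → U, θs.Realize a → θ.Realize a) ∧
      ∀ c : Fin m → U, φ.Realize (Sum.elim c b) →
        Xor'
          ({a : Fin n → M | θs.Realize (fun j => (a j : U)) ∧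
              φ.Realize (Sum.elim c fun j => (a j : U))} = ∅)
          (∀ θ' : (L[[(M : Set U)]]).Formula (Fin n), θ'.Realize b →
            ¬ ∃ σ : (L[[(M : Set U)]]).Formula (Fin n),
              {a : Fin n → M | θ'.Realize (fun j => (a j : U)) ∧
                  θs.Realize (fun j => (a j : U)) ∧
                  φ.Realize (Sum.elim c fun j => (a j : U))} =
                {a : Fin n → M | σ.Realize (fun j => (a j : U))}) := by
  let trace (c : {c : Fin m → U // φ.Realize (Sum.elim c b)}) : Set (Fin n → M) :=
    M.realizeSet θ ∩ M.fiber φ c.1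
  obtain ⟨θs, hθsb, hθsθ, hθs⟩ := M.exists_le_forall_inter_eq_empty hθb
    (S := {t ∈ Set.range trace | M.DefinableOnType b t}) (hfin.subset (Set.sep_subset _ _))
    (by rintro _ ⟨⟨c, rfl⟩, ht⟩; exact ht.exists_inter_eq_empty hb Set.inter_subset_right)
  refine ⟨θs, hθsb, hθsθ, fun c hc => ?_⟩
  have htrace : M.realizeSet θs ∩ M.fiber φ c = M.realizeSet θs ∩ trace ⟨c, hc⟩ := by
    have hθsθ' : M.realizeSet θs ⊆ M.realizeSet θ := fun a => hθsθ _
    rw [← Set.inter_assoc, Set.inter_eq_left.2 hθsθ']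
  have hempty_iff : M.realizeSet θs ∩ M.fiber φ c = ∅ ↔
      M.DefinableOnType b (M.realizeSet θs ∩ M.fiber φ c) :=
    ⟨fun h => h ▸ M.definableOnType_empty b, fun h => htrace ▸
      hθs _ ⟨⟨⟨c, hc⟩, rfl⟩, (htrace ▸ h).of_inter hθsb⟩⟩
  convert xor_not_right.2 hempty_iff using 1
  simp only [ElementarySubstructure.DefinableOnType, not_exists, not_and]
  rfl
end
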